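/- arXiv:0908.1956 — 3 statements merged into one kernel-verified Lean document; each statement's English description precedes it below -/
import Mathlib

section
/- Product formula for total Laplacian spectra of cubical complexes: Let X ⊆ Q_m and Y ⊆ Q_n be proper cubical complexes, and let Z = X × Y := {f ⌢ g ∈ Q_{m+n} : f ∈ X, g ∈ Y} (concatenation of tuples), which is a proper cubical complex in Q_{m+n}. Then for every k ≥ 0, the multiset s^tot_k(Z) equals the multiset sum, over all pairs (i, j) of nonnegative integers with i + j = k, of the multisets {λ + μ : λ ∈ s^tot_i(X), μ ∈ s^tot_j(Y)} (each pair (λ, μ) counted with multiplicity). -/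
open BigOperators Matrix

namespace CubicalPaper

/-- Faces of the `n`-cube `Q_n`: tuples in `{0, 1, ✱}ⁿ`, with `2 : Fin 3` playing the
role of `✱`. -/
abbrev Face (n : ℕ) : Type := Fin n → Fin 3

/-- The direction set of a face: the coordinates equal to `✱`. -/
def dir {n : ℕ} (f : Face n) : Finset (Fin n) := Finset.univ.filter fun i => f i = 2

/-- The dimension of a face. -/
def fdim {n : ℕ} (f : Face n) : ℕ := (dir f).card

/-- The partial order on `Q_n`: `f ≤ g` iff `f i = g i` whenever `g i ≠ ✱`. -/
def cubeLE {n : ℕ} (f g : Face n) : Prop := ∀ i, g i ≠ 2 → f i = g i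

/-- A proper cubical complex: a downward-closed set of faces of `Q_n`. -/
def IsComplex {n : ℕ} (X : Finset (Face n)) : Prop :=
  ∀ g ∈ X, ∀ f, cubeLE f g → f ∈ X

/-- The incidence sign `ε(f, g)`: if `dir g = {a_1 < ⋯ < a_i}` and `f` is obtained from
`g` by changing the entry `g (a_j) = ✱` to `0` (resp. `1`), then `ε(f,g) = (-1)^j`
(resp. `(-1)^(j+1)`); in all other cases `ε(f,g) = 0`. -/
def eps {n : ℕ} (f g : Face n) : ℤ :=
  ∑ a : Fin n,
    if g a = 2 ∧ f a ≠ 2 ∧ ∀ b, b ≠ a → f b = g b then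
      (-1 : ℤ) ^ ((Finset.univ.filter fun b => g b = 2 ∧ b ≤ a).card +
        if f a = 1 then 1 else 0)
    else 0

/-- The `k`-dimensional faces of `X`. -/
def faceSet {n : ℕ} (X : Finset (Face n)) (k : ℕ) : Finset (Face n) :=
  X.filter fun f => fdim f = k

/-- The real cubical boundary matrix `∂_{k+1}` of `X`, with rows indexed by `X_k`
and columns by `X_{k+1}`, entries `ε(f, g)`. -/
def bdryM {n : ℕ} (X : Finset (Face n)) (k : ℕ) :
    Matrix {f // f ∈ faceSet X k} {g // g ∈ faceSet X (k + 1)} ℝ :=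
  Matrix.of fun f g => (eps f.1 g.1 : ℝ)

/-- The up-down Laplacian `L^ud_k = ∂_{k+1} ∂_{k+1}^T`. -/
noncomputable def Lud {n : ℕ} (X : Finset (Face n)) (k : ℕ) :
    Matrix {f // f ∈ faceSet X k} {f // f ∈ faceSet X k} ℝ :=
  bdryM X k * (bdryM X k)ᵀ

/-- The down-up Laplacian `L^du_k = ∂_k^T ∂_k` (with `∂_0 = 0`). -/
noncomputable def Ldu {n : ℕ} (X : Finset (Face n)) :
    (k : ℕ) → Matrix {f // f ∈ faceSet X k} {f // f ∈ faceSet X k} ℝ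
  | 0 => 0
  | (j + 1) => (bdryM X j)ᵀ * bdryM X j

/-- The total Laplacian `L^tot_k = L^ud_k + L^du_k`. -/
noncomputable def Ltot {n : ℕ} (X : Finset (Face n)) (k : ℕ) :
    Matrix {f // f ∈ faceSet X k} {f // f ∈ faceSet X k} ℝ :=
  Lud X k + Ldu X k

/-- The spectrum `s^tot_k(X)` of `L^tot_k`: the multiset of roots of its characteristic
polynomial (all of which are real, `L^tot_k` being real symmetric). -/
noncomputable def stot {n : ℕ} (X : Finset (Face n)) (k : ℕ) : Multiset ℝ :=
  (Ltot X k).charpoly.roots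

/-- The spectrum `s^ud_k(X)` of `L^ud_k`. -/
noncomputable def sud {n : ℕ} (X : Finset (Face n)) (k : ℕ) : Multiset ℝ :=
  (Lud X k).charpoly.roots

/-- The product `X × Y ⊆ Q_{m+n}` of cubical complexes, via concatenation of tuples. -/
def cprod {m n : ℕ} (X : Finset (Face m)) (Y : Finset (Face n)) :
    Finset (Face (m + n)) :=
  (X ×ˢ Y).image fun p => Fin.append p.1 p.2

end CubicalPaper

/-!
Write `∂` for the boundary matrix of a face set on all of its faces at once and
`σ = diag ((-1) ^ dim)`. Concatenation identifies the faces of `X × Y` with pairs of faces, and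
under this identification `∂_{X×Y} = ∂_X ⊗ 1 + σ ⊗ ∂_Y` (Koszul sign rule). As `σ` is a symmetric
involution anticommuting with `∂_X`, the cross terms of `∂ ∂ᵀ + ∂ᵀ ∂` cancel, so the total
Laplacian of `X × Y` is the Kronecker sum `Δ_X ⊗ 1 + 1 ⊗ Δ_Y`. On the faces of dimension `k` it is
block diagonal with blocks `L^tot_i(X) ⊗ 1 + 1 ⊗ L^tot_{k-i}(Y)`, and diagonalizing both
factors by orthogonal matrices shows that the spectrum of such a Kronecker sum consists of the
pairwise sums of eigenvalues.
-/

open Kronecker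

namespace Matrix
open Polynomial

section BlockDiagonal
variable {o : Type*} [Fintype o] [DecidableEq o] {σ : o → Type*} [∀ i, Fintype (σ i)]
  [∀ i, DecidableEq (σ i)]

theorem det_blockDiagonal' {R : Type*} [CommRing R] (M : ∀ i, Matrix (σ i) (σ i) R) :
    (blockDiagonal' M).det = ∏ i, (M i).det := by
  -- `det_fintype` needs a linear order on the blocks; any one will do.
  let : LinearOrder o := LinearOrder.lift' _ (Fintype.equivFin o).injective
  rw [(blockTriangular_blockDiagonal' M).det_fintype]
  refine Finset.prod_congr rfl fun i _ => ?_
  rw [← det_submatrix_equiv_self (Equiv.sigmaSubtype i).symm]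
  congr 1
  ext x y
  exact blockDiagonal'_apply_eq M i x y

theorem charpoly_blockDiagonal' {R : Type*} [CommRing R] (M : ∀ i, Matrix (σ i) (σ i) R) :
    (blockDiagonal' M).charpoly = ∏ i, (M i).charpoly := by
  have : charmatrix (blockDiagonal' M) = blockDiagonal' fun i => charmatrix (M i) := by
    refine Matrix.ext fun ⟨i, x⟩ ⟨j, y⟩ => ?_
    rcases eq_or_ne i j with rfl | hij
    · simp [charmatrix_apply, blockDiagonal'_apply_eq, diagonal_apply]
    · simp [blockDiagonal'_apply_ne _ _ _ hij, hij]
  rw [charpoly, this, det_blockDiagonal']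
  rfl

theorem roots_charpoly_blockDiagonal' {K : Type*} [Field K] (M : ∀ i, Matrix (σ i) (σ i) K) :
    (blockDiagonal' M).charpoly.roots = ∑ i, (M i).charpoly.roots := by
  rw [charpoly_blockDiagonal', roots_prod _ _ (Finset.prod_ne_zero_iff.2 fun i _ =>
    (charpoly_monic (M i)).ne_zero)]
  rfl

end BlockDiagonal

theorem roots_charpoly_diagonal {p K : Type*} [Fintype p] [DecidableEq p] [Field K] (d : p → K) :
    (diagonal d).charpoly.roots = Finset.univ.val.map d := by
  rw [charpoly_diagonal, Finset.prod_eq_multiset_prod,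
    ← roots_multiset_prod_X_sub_C (Finset.univ.val.map d), Multiset.map_map]
  rfl

theorem IsHermitian.roots_charpoly_kronecker_one_add_one_kronecker {𝕜 p q : Type*} [RCLike 𝕜]
    [Fintype p] [DecidableEq p] [Fintype q] [DecidableEq q] {A : Matrix p p 𝕜} {B : Matrix q q 𝕜}
    (hA : A.IsHermitian) (hB : B.IsHermitian) :
    (A ⊗ₖ 1 + 1 ⊗ₖ B).charpoly.roots =
      A.charpoly.roots.bind fun a => B.charpoly.roots.map (a + ·) := by
  set U : Matrix p p 𝕜 := ↑hA.eigenvectorUnitary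
  set V : Matrix q q 𝕜 := ↑hB.eigenvectorUnitary
  have hU : star U * U = 1 := Unitary.coe_star_mul_self _
  have hV : star V * V = 1 := Unitary.coe_star_mul_self _
  have hW : U ⊗ₖ V * star (U ⊗ₖ V) = 1 := by
    rw [star_eq_conjTranspose, conjTranspose_kronecker, ← mul_kronecker_mul,
      ← star_eq_conjTranspose, ← star_eq_conjTranspose, mul_eq_one_comm.1 hU,
      mul_eq_one_comm.1 hV, one_kronecker_one]
  have hA' : star U * A * U = diagonal (RCLike.ofReal ∘ hA.eigenvalues) := by
    simpa using hA.conjStarAlgAut_star_eigenvectorUnitary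
  have hB' : star V * B * V = diagonal (RCLike.ofReal ∘ hB.eigenvalues) := by
    simpa using hB.conjStarAlgAut_star_eigenvectorUnitary
  have hdiag : star (U ⊗ₖ V) * (A ⊗ₖ 1 + 1 ⊗ₖ B) * (U ⊗ₖ V) =
      diagonal fun x : p × q => (hA.eigenvalues x.1 : 𝕜) + hB.eigenvalues x.2 := by
    rw [star_eq_conjTranspose, conjTranspose_kronecker, ← star_eq_conjTranspose,
      ← star_eq_conjTranspose, mul_add, add_mul, ← mul_kronecker_mul, ← mul_kronecker_mul,
      ← mul_kronecker_mul, ← mul_kronecker_mul]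
    simp only [mul_one, hU, hV, hA', hB']
    ext ⟨a, b⟩ ⟨a', b'⟩
    by_cases ha : a = a' <;> by_cases hb : b = b' <;>
      simp [ha, hb]
  have hcharpoly : (A ⊗ₖ 1 + 1 ⊗ₖ B).charpoly =
      (diagonal fun x : p × q => (hA.eigenvalues x.1 : 𝕜) + hB.eigenvalues x.2).charpoly := by
    rw [← hdiag, charpoly_mul_comm, ← mul_assoc, hW, one_mul]
  rw [hcharpoly, roots_charpoly_diagonal, hA.roots_charpoly_eq_eigenvalues,
    hB.roots_charpoly_eq_eigenvalues, ← Finset.univ_product_univ, Finset.product_val]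
  simp [SProd.sprod, Multiset.product, Multiset.map_bind, Multiset.bind_map]

end Matrix

namespace CubicalPaper

section Laplacian
variable {ι κ R : Type*} [Fintype ι] [Fintype κ] [CommRing R]

def laplacian (D : Matrix ι ι R) : Matrix ι ι R := D * Dᵀ + Dᵀ * D

theorem laplacian_reindex {ι' : Type*} [Fintype ι'] (e : ι ≃ ι') (D : Matrix ι ι R) :
    laplacian (reindex e e D) = reindex e e (laplacian D) := by
  simp only [laplacian, reindex_apply, transpose_submatrix, submatrix_mul_equiv]
  rfl

theorem laplacian_kronecker_one_add_kronecker [DecidableEq ι] [DecidableEq κ]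
    (D S : Matrix ι ι R) (E : Matrix κ κ R) (hS : Sᵀ = S) (hSS : S * S = 1)
    (hSD : S * D + D * S = 0) :
    laplacian (D ⊗ₖ 1 + S ⊗ₖ E) = laplacian D ⊗ₖ 1 + 1 ⊗ₖ laplacian E := by
  have hSDt : S * Dᵀ + Dᵀ * S = 0 := by
    simpa [transpose_add, transpose_mul, hS, add_comm] using congrArg transpose hSD
  simp only [laplacian, transpose_add, ← kroneckerMap_transpose, transpose_one, hS, add_mul,
    mul_add, ← mul_kronecker_mul, mul_one, one_mul, hSS]
  have hcross₁ : (S * Dᵀ) ⊗ₖ E + (Dᵀ * S) ⊗ₖ E = 0 := by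
    rw [← add_kronecker, hSDt, zero_kronecker]
  have hcross₂ : (D * S) ⊗ₖ Eᵀ + (S * D) ⊗ₖ Eᵀ = 0 := by
    rw [← add_kronecker, add_comm, hSD, zero_kronecker]
  rw [add_kronecker, kronecker_add]
  linear_combination (norm := abel) hcross₁ + hcross₂

end Laplacian

section Faces
variable {m n : ℕ}

theorem fdim_eq_succ_of_eps_ne_zero {f g : Face n} (h : eps f g ≠ 0) : fdim g = fdim f + 1 := by
  obtain ⟨a, -, ha⟩ := Finset.exists_ne_zero_of_sum_ne_zero h
  obtain ⟨hga, hfa, hfg⟩ := (ite_ne_right_iff.1 ha).1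
  have : dir g = insert a (dir f) := by
    ext b
    by_cases hb : b = a
    · simp [dir, hb, hga]
    · simp [dir, hb, hfg b hb]
  rw [fdim, fdim, this, Finset.card_insert_of_notMem (by simpa [dir] using hfa)]

theorem fdim_append (f : Face m) (g : Face n) : fdim (Fin.append f g) = fdim f + fdim g := by
  simp only [fdim, dir, Finset.card_filter, Fin.sum_univ_add, Fin.append_left, Fin.append_right]

theorem castAdd_lt_natAdd (a : Fin m) (b : Fin n) : Fin.castAdd n a < Fin.natAdd m b := by
  simp only [Fin.lt_def, Fin.val_castAdd, Fin.val_natAdd]; omega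

theorem card_stars_append_le_castAdd (g : Face m) (g' : Face n) (a : Fin m) :
    (Finset.univ.filter fun b => Fin.append g g' b = 2 ∧ b ≤ Fin.castAdd n a).card =
      (Finset.univ.filter fun b => g b = 2 ∧ b ≤ a).card := by
  rw [Finset.card_filter, Finset.card_filter, Fin.sum_univ_add]
  simp [(castAdd_lt_natAdd a _).not_ge]
  rfl

theorem card_stars_append_le_natAdd (g : Face m) (g' : Face n) (a : Fin n) :
    (Finset.univ.filter fun b => Fin.append g g' b = 2 ∧ b ≤ Fin.natAdd m a).card =
      fdim g + (Finset.univ.filter fun b => g' b = 2 ∧ b ≤ a).card := by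
  rw [fdim, dir, Finset.card_filter, Finset.card_filter, Finset.card_filter, Fin.sum_univ_add]
  simp [(castAdd_lt_natAdd _ a).le]

theorem append_eq_append_off_castAdd_iff {f f' : Face m} {g g' : Face n} {a : Fin m} :
    (∀ b, b ≠ Fin.castAdd n a → Fin.append f g b = Fin.append f' g' b) ↔
      (∀ b, b ≠ a → f b = f' b) ∧ g = g' := by
  simp [Fin.forall_fin_add, funext_iff, (castAdd_lt_natAdd _ _).ne']

theorem append_eq_append_off_natAdd_iff {f f' : Face m} {g g' : Face n} {a : Fin n} :
    (∀ b, b ≠ Fin.natAdd m a → Fin.append f g b = Fin.append f' g' b) ↔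
      f = f' ∧ ∀ b, b ≠ a → g b = g' b := by
  simp [Fin.forall_fin_add, funext_iff, (castAdd_lt_natAdd _ _).ne]

theorem eps_append (f f' : Face m) (g g' : Face n) :
    eps (Fin.append f g) (Fin.append f' g') =
      (if g = g' then eps f f' else 0) + (if f = f' then (-1) ^ fdim f' * eps g g' else 0) := by
  unfold eps
  rw [Fin.sum_univ_add]
  simp only [Fin.append_left, Fin.append_right, card_stars_append_le_castAdd,
    card_stars_append_le_natAdd, append_eq_append_off_castAdd_iff,
    append_eq_append_off_natAdd_iff]
  congr 1
  · by_cases hg : g = g' <;> simp [hg]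
  · by_cases hf : f = f'
    · simp [hf, Finset.mul_sum, pow_add]
    · simp [hf]

end Faces

section Boundary
variable {n : ℕ} (X : Finset (Face n))

def boundary : Matrix X X ℝ := of fun f g => (eps f.1 g.1 : ℝ)

def signMatrix : Matrix X X ℝ := diagonal fun f => (-1) ^ fdim f.1

theorem signMatrix_transpose : (signMatrix X)ᵀ = signMatrix X := diagonal_transpose _

theorem signMatrix_mul_self : signMatrix X * signMatrix X = 1 := by
  simp [signMatrix, ← mul_pow]

theorem signMatrix_mul_boundary_add :
    signMatrix X * boundary X + boundary X * signMatrix X = 0 := by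
  ext f g
  simp only [signMatrix, boundary, Matrix.add_apply, diagonal_mul, mul_diagonal, of_apply,
    Matrix.zero_apply]
  by_cases h : eps f.1 g.1 = 0
  · simp [h]
  · rw [fdim_eq_succ_of_eps_ne_zero h, pow_succ]
    ring

theorem ne_of_mem_faceSet {d d' : ℕ} {f f' : Face n} (hf : f ∈ faceSet X d)
    (hf' : f' ∈ faceSet X d') (hd : d ≠ d') : f ≠ f' := by
  rintro rfl
  exact hd ((Finset.mem_filter.1 hf).2.symm.trans (Finset.mem_filter.1 hf').2)

theorem sum_faceSet_eq_sum {F : Face n → ℝ} {d : ℕ} (hF : ∀ h ∈ X, F h ≠ 0 → fdim h = d) :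
    ∑ h : faceSet X d, F h = ∑ h : X, F h := by
  rw [Finset.sum_coe_sort, Finset.sum_coe_sort]
  exact Finset.sum_filter_of_ne hF

theorem Ltot_eq_submatrix_laplacian (k : ℕ) :
    Ltot X k = (laplacian (boundary X)).submatrix (fun f => ⟨f.1, Finset.mem_of_mem_filter _ f.2⟩)
      (fun f => ⟨f.1, Finset.mem_of_mem_filter _ f.2⟩) := by
  ext f f'
  have hf : fdim f.1 = k := (Finset.mem_filter.1 f.2).2
  simp only [Ltot, laplacian, Matrix.add_apply, submatrix_apply]
  congr 1
  · simp only [Lud, bdryM, boundary, mul_apply, transpose_apply, of_apply]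
    refine sum_faceSet_eq_sum X (F := fun h => (eps f.1 h : ℝ) * eps f'.1 h) fun h _ hne => ?_
    rw [fdim_eq_succ_of_eps_ne_zero (Int.cast_ne_zero.1 (left_ne_zero_of_mul hne)), hf]
  · rcases k with _ | j
    · refine (Finset.sum_eq_zero fun h _ => ?_).symm
      have : eps h.1 f.1 = 0 := by
        by_contra hne
        have := fdim_eq_succ_of_eps_ne_zero hne
        omega
      simp [boundary, this]
    · simp only [Ldu, bdryM, boundary, mul_apply, transpose_apply, of_apply]
      refine sum_faceSet_eq_sum X (F := fun h => (eps h f.1 : ℝ) * eps h f'.1) fun h _ hne => ?_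
      have := fdim_eq_succ_of_eps_ne_zero (Int.cast_ne_zero.1 (left_ne_zero_of_mul hne))
      omega

theorem isHermitian_Ltot (k : ℕ) : (Ltot X k).IsHermitian := by
  rw [Ltot_eq_submatrix_laplacian]
  refine IsHermitian.submatrix ?_ _
  simp only [laplacian, ← conjTranspose_eq_transpose_of_trivial]
  exact (isHermitian_mul_conjTranspose_self _).add (isHermitian_conjTranspose_mul_self _)

end Boundary

section Product
variable {m n : ℕ} (X : Finset (Face m)) (Y : Finset (Face n))

theorem mem_cprod_iff {h : Face (m + n)} :
    h ∈ cprod X Y ↔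
      ((Fin.appendEquiv m n).symm h).1 ∈ X ∧ ((Fin.appendEquiv m n).symm h).2 ∈ Y := by
  rw [cprod, Finset.mem_image, ← Finset.mem_product]
  exact ⟨by rintro ⟨p, hp, rfl⟩; simpa using hp,
    fun hh => ⟨_, hh, (Fin.appendEquiv m n).apply_symm_apply h⟩⟩

def cprodEquiv : cprod X Y ≃ X × Y :=
  ((Fin.appendEquiv m n).symm.subtypeEquiv fun _ => mem_cprod_iff X Y).trans
    Equiv.subtypeProdEquivProd

theorem reindex_boundary_cprod :
    reindex (cprodEquiv X Y) (cprodEquiv X Y) (boundary (cprod X Y)) =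
      boundary X ⊗ₖ 1 + signMatrix X ⊗ₖ boundary Y := by
  ext ⟨f, g⟩ ⟨f', g'⟩
  change ((eps (Fin.append f.1 g.1) (Fin.append f'.1 g'.1) : ℤ) : ℝ) = _
  rw [eps_append]
  by_cases hf : f = f' <;> by_cases hg : g = g' <;>
    simp [boundary, signMatrix, one_apply, hf, hg]

theorem reindex_laplacian_boundary_cprod :
    reindex (cprodEquiv X Y) (cprodEquiv X Y) (laplacian (boundary (cprod X Y))) =
      laplacian (boundary X) ⊗ₖ 1 + 1 ⊗ₖ laplacian (boundary Y) := by
  rw [← laplacian_reindex, reindex_boundary_cprod,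
    laplacian_kronecker_one_add_kronecker _ _ _ (signMatrix_transpose X) (signMatrix_mul_self X)
      (signMatrix_mul_boundary_add X)]

theorem append_mem_faceSet_cprod {i j k : ℕ} {f : Face m} {g : Face n} (hf : f ∈ faceSet X i)
    (hg : g ∈ faceSet Y j) (hk : i + j = k) : Fin.append f g ∈ faceSet (cprod X Y) k := by
  rw [faceSet, Finset.mem_filter] at *
  exact ⟨Finset.mem_image.2 ⟨(f, g), Finset.mem_product.2 ⟨hf.1, hg.1⟩, rfl⟩,
    by rw [fdim_append, hf.2, hg.2, hk]⟩

theorem fdim_appendEquiv_symm (h : Face (m + n)) :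
    fdim ((Fin.appendEquiv m n).symm h).1 + fdim ((Fin.appendEquiv m n).symm h).2 = fdim h := by
  rw [← fdim_append]
  exact congrArg fdim ((Fin.appendEquiv m n).apply_symm_apply h)

def appendFaceSet (k : ℕ) (s : Σ i : Fin (k + 1), faceSet X i × faceSet Y (k - i)) :
    faceSet (cprod X Y) k :=
  ⟨Fin.append s.2.1.1 s.2.2.1,
    append_mem_faceSet_cprod X Y s.2.1.2 s.2.2.2 (Nat.add_sub_of_le (Nat.le_of_lt_succ s.1.2))⟩

theorem appendFaceSet_injective (k : ℕ) : Function.Injective (appendFaceSet X Y k) := by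
  rintro ⟨i, f, g⟩ ⟨i', f', g'⟩ heq
  obtain ⟨hff', hgg'⟩ := Prod.mk.inj ((Fin.appendEquiv m n).injective (Subtype.ext_iff.1 heq))
  obtain rfl : i = i' := Fin.ext <| by
    rw [← (Finset.mem_filter.1 f.2).2, ← (Finset.mem_filter.1 f'.2).2]
    exact congrArg fdim hff'
  obtain rfl := Subtype.ext hff'
  obtain rfl := Subtype.ext hgg'
  rfl

def cprodFaceSetEquiv (k : ℕ) :
    faceSet (cprod X Y) k ≃ Σ i : Fin (k + 1), faceSet X i × faceSet Y (k - i) where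
  toFun h :=
    let p := (Fin.appendEquiv m n).symm h.1
    have hmem := (mem_cprod_iff X Y).1 (Finset.mem_of_mem_filter _ h.2)
    have hk : fdim p.1 + fdim p.2 = k :=
      (fdim_appendEquiv_symm h.1).trans (Finset.mem_filter.1 h.2).2
    ⟨⟨fdim p.1, by omega⟩, ⟨p.1, Finset.mem_filter.2 ⟨hmem.1, rfl⟩⟩,
      ⟨p.2, Finset.mem_filter.2 ⟨hmem.2, by simp only; omega⟩⟩⟩
  invFun := appendFaceSet X Y k
  left_inv h := Subtype.ext ((Fin.appendEquiv m n).apply_symm_apply h.1)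
  right_inv := Function.LeftInverse.rightInverse_of_injective
    (fun h => Subtype.ext ((Fin.appendEquiv m n).apply_symm_apply h.1))
    (appendFaceSet_injective X Y k)

theorem reindex_Ltot_cprod (k : ℕ) :
    reindex (cprodFaceSetEquiv X Y k) (cprodFaceSetEquiv X Y k) (Ltot (cprod X Y) k) =
      blockDiagonal' fun i : Fin (k + 1) => Ltot X i ⊗ₖ 1 + 1 ⊗ₖ Ltot Y (k - i) := by
  ext ⟨i, f, g⟩ ⟨i', f', g'⟩
  have hlap := congrFun (congrFun (reindex_laplacian_boundary_cprod X Y)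
    (⟨f.1, Finset.mem_of_mem_filter _ f.2⟩, ⟨g.1, Finset.mem_of_mem_filter _ g.2⟩))
    (⟨f'.1, Finset.mem_of_mem_filter _ f'.2⟩, ⟨g'.1, Finset.mem_of_mem_filter _ g'.2⟩)
  rw [reindex_apply, submatrix_apply] at hlap
  rw [reindex_apply, submatrix_apply, Ltot_eq_submatrix_laplacian, submatrix_apply]
  refine hlap.trans ?_
  by_cases hi : i = i'
  · subst hi
    rw [blockDiagonal'_apply_eq]
    simp only [Matrix.add_apply, kronecker_apply, Ltot_eq_submatrix_laplacian, submatrix_apply,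
      one_apply, Subtype.ext_iff]
  · have hf := ne_of_mem_faceSet X f.2 f'.2 (fun h => hi (Fin.ext h))
    have hg := ne_of_mem_faceSet Y g.2 g'.2 (by omega)
    simp [blockDiagonal'_apply_ne _ _ _ hi, one_apply, hf, hg]

end Product

theorem product_total_spectrum_general {m n : ℕ}
    (X : Finset (Face m)) (Y : Finset (Face n)) (k : ℕ) :
    stot (cprod X Y) k =
      ∑ i ∈ Finset.range (k + 1),
        (stot X i).bind fun lam => (stot Y (k - i)).map fun mu => lam + mu := by
  rw [stot, ← charpoly_reindex (cprodFaceSetEquiv X Y k), reindex_Ltot_cprod,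
    roots_charpoly_blockDiagonal', ← Fin.sum_univ_eq_sum_range
      (fun i => (stot X i).bind fun lam => (stot Y (k - i)).map (lam + ·))]
  exact Finset.sum_congr rfl fun i _ =>
    (isHermitian_Ltot X i).roots_charpoly_kronecker_one_add_one_kronecker (isHermitian_Ltot Y _)

/-- **Product formula for total Laplacian spectra** (Duval–Klivans–Martin,
Thm. 2.1 / §2.3).  For proper cubical complexes `X ⊆ Q_m`, `Y ⊆ Q_n` and `Z = X × Y`,
the multiset `s^tot_k(Z)` is the multiset sum over `i + j = k` of
`{λ + μ : λ ∈ s^tot_i(X), μ ∈ s^tot_j(Y)}`. -/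
theorem product_total_spectrum {m n : ℕ}
    (X : Finset (Face m)) (Y : Finset (Face n))
    (hX : IsComplex X) (hY : IsComplex Y) (k : ℕ) :
    stot (cprod X Y) k =
      ∑ i ∈ Finset.range (k + 1),
        (stot X i).bind fun lam => (stot Y (k - i)).map fun mu => lam + mu :=
  product_total_spectrum_general X Y k

end CubicalPaper
end

section
/- Prism spectrum, total Laplacians: Let X ⊆ Q_n be a proper cubical complex and let P X = {f ∈ Q_{n+1} : (f_1, …, f_n) ∈ X} be its prism. Then for every i ≥ 0, s^tot_i(P X) = s^tot_i(X) + (s^tot_i(X) + 2) + (s^tot_{i−1}(X) + 2), where for a multiset m of reals, m + 2 denotes {λ + 2 : λ ∈ m} (with multiplicity), + between multisets is multiset sum (disjoint union), and s^tot_{−1}(X) is the empty multiset. -/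
open BigOperators Matrix

namespace CubicalPaper

/-- The prism `P X ⊆ Q_{n+1}` over `X ⊆ Q_n`: all faces whose first `n` coordinates
form a face of `X`. -/
def prism {n : ℕ} (X : Finset (Face n)) : Finset (Face (n + 1)) :=
  Finset.univ.filter fun f => Fin.init f ∈ X

/-!
Order the faces of the prism as `f0`, `f1` and `g✱` for faces `f`, `g` of `X`. Then
`∂(fc) = (∂f)c` and `∂(g✱) = (∂g)✱ + (-1)^(dim g + 1) (g0 - g1)`. Since that sign alternates with
the dimension, the cross terms between `✱`-faces and the other faces cancel in
`L^tot = ∂∂ᵀ + ∂ᵀ∂`, and `L^tot_k(P X)` is block diagonal with blocks `[[L + 1, -1], [-1, L + 1]]`,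
where `L = L^tot_k(X)`, and `L^tot_{k-1}(X) + 2`. The first block is similar to a block triangular
matrix with diagonal blocks `L` and `L + 2`.
-/

section BlockMatrices

variable {R : Type*} [CommRing R] {a b c e : Type*}

/-- The boundary of a prism in the bases `f0, f1, g✱`. -/
def prismBoundary [DecidableEq a] (σ : R) (d : Matrix a b R) (d' : Matrix c a R) :
    Matrix ((a ⊕ a) ⊕ c) ((b ⊕ b) ⊕ a) R :=
  fromBlocks (fromBlocks d 0 0 d) (fromRows (σ • 1) (-(σ • 1))) 0 d'

theorem prismBoundary_laplacian [Fintype a] [Fintype b] [Fintype c] [Fintype e]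
    [DecidableEq a] [DecidableEq c] {σ : R} (hσ : σ * σ = 1)
    (d₂ : Matrix a b R) (d₁ : Matrix c a R) (d₀ : Matrix e c R) :
    prismBoundary σ d₂ d₁ * (prismBoundary σ d₂ d₁)ᵀ +
        (prismBoundary (-σ) d₁ d₀)ᵀ * prismBoundary (-σ) d₁ d₀ =
      fromBlocks
        (fromBlocks (d₂ * d₂ᵀ + d₁ᵀ * d₁ + 1) (-1) (-1) (d₂ * d₂ᵀ + d₁ᵀ * d₁ + 1)) 0 0
        (d₁ * d₁ᵀ + d₀ᵀ * d₀ + (2 : R) • 1) := by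
  ext ((i | i) | i) ((j | j) | j) <;>
    simp [prismBoundary, mul_apply, Fintype.sum_sum_type, one_apply, hσ, two_smul,
      eq_comm (a := j)] <;> ring

theorem charpoly_fromBlocks_self_self [Fintype a] [DecidableEq a] (A B : Matrix a a R) :
    (fromBlocks A B B A).charpoly = (A + B).charpoly * (A - B).charpoly := by
  let P : Matrix (a ⊕ a) (a ⊕ a) R := fromBlocks 1 1 0 1
  let Q : Matrix (a ⊕ a) (a ⊕ a) R := fromBlocks 1 (-1) 0 1
  have hQP : Q * P = 1 := by simp [P, Q, fromBlocks_multiply]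
  have hconj : P * fromBlocks A B B A * Q = fromBlocks (A + B) 0 B (A - B) := by
    simp only [P, Q, fromBlocks_multiply, Matrix.one_mul, Matrix.mul_one, Matrix.zero_mul,
      Matrix.mul_zero, add_zero, zero_add, Matrix.mul_neg]
    congr 1 <;> abel
  rw [← charpoly_fromBlocks_zero₁₂, ← hconj, charpoly_mul_comm, ← mul_assoc, hQP, one_mul]

end BlockMatrices

theorem roots_charpoly_add_smul_one {K : Type*} [Field K] {a : Type*} [Fintype a]
    [DecidableEq a] (M : Matrix a a K) (c : K) :
    (M + c • 1).charpoly.roots = M.charpoly.roots.map (· + c) := by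
  have h : M + c • 1 = M - scalar a (-c) := by simp [sub_eq_add_neg, smul_one_eq_diagonal]
  rw [h, charpoly_sub_scalar, ← one_mul Polynomial.X, ← Polynomial.C_1,
    Polynomial.roots_comp_C_mul_X_add_C _ _ _ isUnit_one]
  simp [sub_eq_add_neg]

theorem roots_charpoly_prismBlocks {K : Type*} [Field K] {a c : Type*} [Fintype a] [Fintype c]
    [DecidableEq a] [DecidableEq c] (L : Matrix a a K) (M : Matrix c c K) :
    (fromBlocks (fromBlocks (L + 1) (-1) (-1) (L + 1)) 0 0 M).charpoly.roots =
      L.charpoly.roots + L.charpoly.roots.map (· + 2) + M.charpoly.roots := by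
  have hsum : L + 1 + -1 = L := by abel
  have hdiff : L + 1 - -1 = L + (2 : K) • 1 := by rw [two_smul]; abel
  have hL := charpoly_monic L
  have hL₂ := charpoly_monic (L + (2 : K) • 1)
  rw [charpoly_fromBlocks_zero₂₁, charpoly_fromBlocks_self_self, hsum, hdiff,
    Polynomial.roots_mul ((hL.mul hL₂).mul (charpoly_monic M)).ne_zero,
    Polynomial.roots_mul (hL.mul hL₂).ne_zero, roots_charpoly_add_smul_one]

def Face.snoc {n : ℕ} (f : Face n) (c : Fin 3) : Face (n + 1) := Fin.snoc f c

namespace Face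

variable {n : ℕ}

@[simp] theorem snoc_castSucc (f : Face n) (c : Fin 3) (i : Fin n) :
    snoc f c i.castSucc = f i := Fin.snoc_castSucc ..

@[simp] theorem snoc_last (f : Face n) (c : Fin 3) : snoc f c (Fin.last n) = c :=
  Fin.snoc_last ..

@[simp] theorem init_snoc (f : Face n) (c : Fin 3) : Fin.init (snoc f c) = f :=
  Fin.init_snoc ..

theorem snoc_init_self (h : Face (n + 1)) : snoc (Fin.init h) (h (Fin.last n)) = h :=
  Fin.snoc_init_self h

theorem snoc_inj {f g : Face n} {c d : Fin 3} : snoc f c = snoc g d ↔ f = g ∧ c = d :=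
  Fin.snoc_inj

theorem fdim_snoc (f : Face n) (c : Fin 3) :
    fdim (snoc f c) = fdim f + if c = 2 then 1 else 0 := by
  simp only [fdim, dir]
  rw [Finset.card_filter, Finset.card_filter, Fin.sum_univ_castSucc]
  simp

theorem card_filter_snoc_le_castSucc (g : Face n) (d : Fin 3) (i : Fin n) :
    (Finset.univ.filter fun b => snoc g d b = 2 ∧ b ≤ i.castSucc).card =
      (Finset.univ.filter fun b => g b = 2 ∧ b ≤ i).card := by
  rw [Finset.card_filter, Finset.card_filter, Fin.sum_univ_castSucc]
  simp [(Fin.castSucc_lt_last i).not_ge]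

theorem card_filter_snoc_le_last (g : Face n) :
    (Finset.univ.filter fun b => snoc g 2 b = 2 ∧ b ≤ Fin.last n).card = fdim g + 1 := by
  simpa [fdim, dir, Fin.le_last] using fdim_snoc g 2

theorem eps_snoc_snoc (f g : Face n) (c d : Fin 3) :
    eps (snoc f c) (snoc g d) = (if c = d then eps f g else 0) +
      if d = 2 ∧ c ≠ 2 ∧ f = g then (-1) ^ (fdim g + 1 + if c = 1 then 1 else 0) else 0 := by
  unfold eps
  rw [Fin.sum_univ_castSucc]
  congr 1
  · split_ifs with hcd
    · subst hcd
      simp [Fin.forall_fin_succ', (Fin.castSucc_ne_last _).symm, card_filter_snoc_le_castSucc]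
    · simp [Fin.forall_fin_succ', (Fin.castSucc_ne_last _).symm, hcd]
  · have hcond : (snoc g d (Fin.last n) = 2 ∧ snoc f c (Fin.last n) ≠ 2 ∧
        ∀ b, b ≠ Fin.last n → snoc f c b = snoc g d b) ↔ d = 2 ∧ c ≠ 2 ∧ f = g := by
      simp [Fin.forall_fin_succ', Fin.castSucc_ne_last, funext_iff]
    rw [if_congr hcond rfl rfl, snoc_last]
    by_cases h : d = 2 ∧ c ≠ 2 ∧ f = g
    · obtain ⟨rfl, -, rfl⟩ := h
      simp [card_filter_snoc_le_last]
    · simp only [h, if_false]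

end Face

section Prism

variable {n : ℕ} {X : Finset (Face n)} {k : ℕ}

theorem mem_faceSet {f : Face n} : f ∈ faceSet X k ↔ f ∈ X ∧ fdim f = k :=
  Finset.mem_filter

/-- `faceSetPred X k = X_{k-1}`, with `X_{-1} = ∅`. Faces of dimension `k` are indexed by
`faceSetPred X (k + 1)` from here on, so that `X_k` enters the prism's `k`- and `(k+1)`-faces
through syntactically the same type. -/
def faceSetPred (X : Finset (Face n)) : ℕ → Finset (Face n)
  | 0 => ∅
  | k + 1 => faceSet X k

theorem mem_faceSetPred {f : Face n} : f ∈ faceSetPred X k ↔ f ∈ X ∧ fdim f + 1 = k := by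
  cases k <;> simp [faceSetPred, mem_faceSet]

theorem fdim_of_mem_faceSetPred_succ {f : Face n} (hf : f ∈ faceSetPred X (k + 1)) :
    fdim f = k :=
  Nat.add_right_cancel (mem_faceSetPred.1 hf).2

instance (X : Finset (Face n)) : IsEmpty {f // f ∈ faceSetPred X 0} :=
  ⟨fun f => Finset.notMem_empty f.1 f.2⟩

abbrev PrismIndex (X : Finset (Face n)) (k : ℕ) : Type :=
  ({f // f ∈ faceSetPred X (k + 1)} ⊕ {f // f ∈ faceSetPred X (k + 1)}) ⊕
    {f // f ∈ faceSetPred X k}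

def prismFace : PrismIndex X k → Face (n + 1)
  | .inl (.inl f) => Face.snoc f 0
  | .inl (.inr f) => Face.snoc f 1
  | .inr f => Face.snoc f 2

theorem snoc_mem_faceSet_prism {f : Face n} {c : Fin 3} :
    Face.snoc f c ∈ faceSet (prism X) k ↔ f ∈ X ∧ fdim f + (if c = 2 then 1 else 0) = k := by
  simp [mem_faceSet, prism, Face.fdim_snoc]

theorem prismFace_mem (p : PrismIndex X k) : prismFace p ∈ faceSet (prism X) k := by
  rcases p with (⟨f, hf⟩ | ⟨f, hf⟩) | ⟨f, hf⟩ <;>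
    simp only [prismFace, snoc_mem_faceSet_prism] <;>
    simp_all [mem_faceSetPred]

theorem prismFace_injective : Function.Injective (prismFace (X := X) (k := k)) := by
  rintro ((f | f) | f) ((g | g) | g) h <;>
    simp_all [prismFace, Face.snoc_inj]

theorem prismFace_surjective {h : Face (n + 1)} (hh : h ∈ faceSet (prism X) k) :
    ∃ p : PrismIndex X k, prismFace p = h := by
  obtain ⟨f, c, rfl⟩ : ∃ f c, Face.snoc f c = h := ⟨_, _, Face.snoc_init_self h⟩
  rw [snoc_mem_faceSet_prism] at hh
  fin_cases c
  · exact ⟨.inl (.inl ⟨f, mem_faceSetPred.2 (by simpa using hh)⟩), rfl⟩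
  · exact ⟨.inl (.inr ⟨f, mem_faceSetPred.2 (by simpa using hh)⟩), rfl⟩
  · exact ⟨.inr ⟨f, mem_faceSetPred.2 (by simpa using hh)⟩, rfl⟩

noncomputable def prismFaceEquiv (X : Finset (Face n)) (k : ℕ) :
    PrismIndex X k ≃ {h // h ∈ faceSet (prism X) k} :=
  Equiv.ofBijective (fun p => ⟨prismFace p, prismFace_mem p⟩)
    ⟨fun _ _ h => prismFace_injective (congrArg Subtype.val h),
      fun h => (prismFace_surjective h.2).imp fun _ hp => Subtype.ext hp⟩

end Prism

section Laplacian

variable {n : ℕ}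

def bdryPred (X : Finset (Face n)) (k : ℕ) :
    Matrix {f // f ∈ faceSetPred X k} {f // f ∈ faceSetPred X (k + 1)} ℝ :=
  Matrix.of fun f g => (eps f.1 g.1 : ℝ)

noncomputable def LtotPred (X : Finset (Face n)) (k : ℕ) :
    Matrix {f // f ∈ faceSetPred X (k + 1)} {f // f ∈ faceSetPred X (k + 1)} ℝ :=
  bdryPred X (k + 1) * (bdryPred X (k + 1))ᵀ + (bdryPred X k)ᵀ * bdryPred X k

theorem Ltot_eq_LtotPred (X : Finset (Face n)) (k : ℕ) : Ltot X k = LtotPred X k := by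
  cases k with
  | zero =>
    have : (bdryPred X 0)ᵀ * bdryPred X 0 = 0 := by ext f g; simp [mul_apply]
    rw [LtotPred, this, add_zero, Ltot, Ldu, add_zero]
    rfl
  | succ k => rfl

theorem stot_eq_roots_charpoly_LtotPred (X : Finset (Face n)) (k : ℕ) :
    stot X k = (LtotPred X k).charpoly.roots :=
  congrArg (fun M => M.charpoly.roots) (Ltot_eq_LtotPred X k)

theorem bdryM_prism_reindex (X : Finset (Face n)) (k : ℕ) :
    (bdryM (prism X) k).submatrix (prismFaceEquiv X k) (prismFaceEquiv X (k + 1)) =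
      prismBoundary ((-1) ^ (k + 1)) (bdryPred X (k + 1)) (bdryPred X k) := by
  ext ((f | f) | f) ((g | g) | g) <;>
    simp [prismBoundary, prismFaceEquiv, prismFace, bdryM, bdryPred, Face.eps_snoc_snoc,
      fdim_of_mem_faceSetPred_succ g.2, one_apply, pow_succ, neg_ite]

theorem Lud_prism_reindex (X : Finset (Face n)) (k : ℕ) :
    (Lud (prism X) k).submatrix (prismFaceEquiv X k) (prismFaceEquiv X k) =
      prismBoundary ((-1) ^ (k + 1)) (bdryPred X (k + 1)) (bdryPred X k) *
        (prismBoundary ((-1) ^ (k + 1)) (bdryPred X (k + 1)) (bdryPred X k))ᵀ := by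
  rw [Lud, ← submatrix_mul_equiv _ _ _ (prismFaceEquiv X (k + 1)), ← transpose_submatrix,
    bdryM_prism_reindex]

theorem Ldu_prism_reindex (X : Finset (Face n)) (k : ℕ) :
    (Ldu (prism X) (k + 1)).submatrix (prismFaceEquiv X (k + 1)) (prismFaceEquiv X (k + 1)) =
      (prismBoundary ((-1) ^ (k + 1)) (bdryPred X (k + 1)) (bdryPred X k))ᵀ *
        prismBoundary ((-1) ^ (k + 1)) (bdryPred X (k + 1)) (bdryPred X k) := by
  rw [Ldu, ← submatrix_mul_equiv _ _ _ (prismFaceEquiv X k), ← transpose_submatrix,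
    bdryM_prism_reindex]

theorem Ltot_prism_zero_reindex (X : Finset (Face n)) :
    (Ltot (prism X) 0).submatrix (prismFaceEquiv X 0) (prismFaceEquiv X 0) =
      fromBlocks (fromBlocks (LtotPred X 0 + 1) (-1) (-1) (LtotPred X 0 + 1)) 0 0 0 := by
  -- `Ldu` vanishes in degree `0`; written as `Bᵀ * B` for a `B` with no rows, the block identity
  -- for the prism still applies.
  set B := prismBoundary (-(-1) ^ (0 + 1) : ℝ) (bdryPred X 0)
    (0 : Matrix {f // f ∈ faceSetPred X 0} {f // f ∈ faceSetPred X 0} ℝ)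
  have hdown :
      (Ldu (prism X) 0).submatrix (prismFaceEquiv X 0) (prismFaceEquiv X 0) = Bᵀ * B := by
    ext p q; simp [Ldu, mul_apply]
  rw [Ltot, submatrix_add, Pi.add_apply, Pi.add_apply, Lud_prism_reindex, hdown,
    prismBoundary_laplacian (by norm_num)]
  congr 1
  exact Subsingleton.elim _ _

theorem Ltot_prism_succ_reindex (X : Finset (Face n)) (k : ℕ) :
    (Ltot (prism X) (k + 1)).submatrix (prismFaceEquiv X (k + 1)) (prismFaceEquiv X (k + 1)) =
      fromBlocks (fromBlocks (LtotPred X (k + 1) + 1) (-1) (-1) (LtotPred X (k + 1) + 1)) 0 0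
        (LtotPred X k + (2 : ℝ) • 1) := by
  have hsign : (-1 : ℝ) ^ (k + 1) = -(-1) ^ (k + 1 + 1) := by ring
  rw [Ltot, submatrix_add, Pi.add_apply, Pi.add_apply, Lud_prism_reindex, Ldu_prism_reindex,
    hsign, prismBoundary_laplacian (by rw [← mul_pow]; norm_num)]
  rfl

end Laplacian

theorem prism_total_spectrum_general {n : ℕ} (X : Finset (Face n)) :
    (stot (prism X) 0 = stot X 0 + (stot X 0).map (fun lam => lam + 2)) ∧
      ∀ i : ℕ, stot (prism X) (i + 1) =
        stot X (i + 1) + (stot X (i + 1)).map (fun lam => lam + 2) +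
          (stot X i).map (fun mu => mu + 2) := by
  have hreindex : ∀ k, stot (prism X) k = ((Ltot (prism X) k).submatrix
      (prismFaceEquiv X k) (prismFaceEquiv X k)).charpoly.roots := fun k =>
    congrArg Polynomial.roots (charpoly_reindex (prismFaceEquiv X k).symm _).symm
  refine ⟨?_, fun i => ?_⟩
  · rw [hreindex, Ltot_prism_zero_reindex, roots_charpoly_prismBlocks,
      charpoly_isEmpty (n := {f // f ∈ faceSetPred X 0}),
      Polynomial.roots_one, Multiset.empty_eq_zero, add_zero, stot_eq_roots_charpoly_LtotPred]
  · rw [hreindex, Ltot_prism_succ_reindex, roots_charpoly_prismBlocks,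
      roots_charpoly_add_smul_one, stot_eq_roots_charpoly_LtotPred,
      stot_eq_roots_charpoly_LtotPred]

/-- **Prism spectrum, total Laplacians** (Duval–Klivans–Martin, Thm. 3.2, eqn. (3.3c)).
For a proper cubical complex `X ⊆ Q_n` and every `i ≥ 0`,
`s^tot_i(P X) = s^tot_i(X) + (s^tot_i(X) + 2) + (s^tot_{i-1}(X) + 2)`
as multisets, where `s^tot_{-1}(X)` is the empty multiset. -/
theorem prism_total_spectrum {n : ℕ} (X : Finset (Face n)) (hX : IsComplex X) :
    (stot (prism X) 0 = stot X 0 + (stot X 0).map (fun lam => lam + 2)) ∧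
      ∀ i : ℕ, stot (prism X) (i + 1) =
        stot X (i + 1) + (stot X (i + 1)).map (fun lam => lam + 2) +
          (stot X i).map (fun mu => mu + 2) :=
  prism_total_spectrum_general X

end CubicalPaper
end

section
/- Algebraically weighted total Laplacian spectra of cubes: Let n ≥ 1 and let q_i, x_i, y_i (1 ≤ i ≤ n) be real numbers with x_i ≠ 0 and y_i ≠ 0 for all i. For C ⊆ {1,…,n} set u_C = Σ_{j∈C} (q_j²/x_j² + q_j²/y_j²). Then for every 0 ≤ k ≤ n, the characteristic polynomial of the weighted total Laplacian L̂^tot_k(Q_n) = ∂̂_{k+1}∂̂_{k+1}^T + ∂̂_k^T ∂̂_k equals ∏_{C ⊆ {1,…,n}} (y − u_C)^{binom(|C|,k)}, where binom(|C|,k) = 0 when |C| < k. -/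
/-!
On the whole cube the weighted boundary is `∂̂ = ∑ₐ ∂̂ₐ`, where `∂̂ₐ` is the tensor product over the
coordinates `i` of `3 × 3` matrices indexed by `{0, 1, ✱}`: the sign `J = diag(1, 1, -1)` for
`i < a`, the boundary `dₐ` of the weighted interval for `i = a`, and `1` for `i > a`. As `dₐ`
anticommutes with `J`, the cross terms of `∂̂∂̂ᵀ + ∂̂ᵀ∂̂` cancel in pairs, and the total Laplacian
of all faces is the Kronecker sum of the interval Laplacians `ℓₐ = dₐdₐᵀ + dₐᵀdₐ`. Each `ℓₐ` is
diagonalised by an invertible matrix, with eigenvalue `0` at `0` and `λₐ = qₐ²/xₐ² + qₐ²/yₐ²` at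
`1` and `✱`, so the tensor product of these eigenbases diagonalises the Laplacian, with eigenvalue
`∑ {λₐ | tₐ ≠ 0}` at the face `t`. All these matrices preserve the dimension of faces, so the same
holds on the `k`-faces, and exactly `binom(|C|, k)` of the `k`-faces `t` have `{a | tₐ ≠ 0} = C`.
-/

open BigOperators Matrix

namespace CubicalPaper

/-- The algebraically weighted cubical boundary matrix `∂̂_{k+1}` of the full cube
`Q_n`: the `(f, g)` entry is `ε(f,g) · q a / x a` if `f` is obtained from `g` by
changing the `✱` in position `a` to `0`, and `ε(f,g) · q a / y a` if it is changed
to `1`. -/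
noncomputable def wbdryM {n : ℕ} (q x y : Fin n → ℝ) (k : ℕ) :
    Matrix {f // f ∈ faceSet (Finset.univ : Finset (Face n)) k}
      {g // g ∈ faceSet (Finset.univ : Finset (Face n)) (k + 1)} ℝ :=
  Matrix.of fun f g =>
    (eps f.1 g.1 : ℝ) *
      ∑ a : Fin n,
        if g.1 a = 2 ∧ f.1 a ≠ 2 ∧ ∀ b, b ≠ a → f.1 b = g.1 b then
          (if f.1 a = 0 then q a / x a else q a / y a)
        else 0

/-- The weighted up-down Laplacian `L̂^ud_k = ∂̂_{k+1} ∂̂_{k+1}^T` of `Q_n`. -/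
noncomputable def wLud {n : ℕ} (q x y : Fin n → ℝ) (k : ℕ) :
    Matrix {f // f ∈ faceSet (Finset.univ : Finset (Face n)) k}
      {f // f ∈ faceSet (Finset.univ : Finset (Face n)) k} ℝ :=
  wbdryM q x y k * (wbdryM q x y k)ᵀ

/-- The weighted down-up Laplacian `L̂^du_k = ∂̂_k^T ∂̂_k` of `Q_n` (with `∂̂_0 = 0`). -/
noncomputable def wLdu {n : ℕ} (q x y : Fin n → ℝ) :
    (k : ℕ) → Matrix {f // f ∈ faceSet (Finset.univ : Finset (Face n)) k}
      {f // f ∈ faceSet (Finset.univ : Finset (Face n)) k} ℝ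
  | 0 => 0
  | (j + 1) => (wbdryM q x y j)ᵀ * wbdryM q x y j

/-- The weighted total Laplacian `L̂^tot_k = L̂^ud_k + L̂^du_k` of `Q_n`. -/
noncomputable def wLtot {n : ℕ} (q x y : Fin n → ℝ) (k : ℕ) :
    Matrix {f // f ∈ faceSet (Finset.univ : Finset (Face n)) k}
      {f // f ∈ faceSet (Finset.univ : Finset (Face n)) k} ℝ :=
  wLud q x y k + wLdu q x y k

end CubicalPaper

lemma Finset.sum_ite_mul_sum_ite {ι R : Type*} [Fintype ι] [CommSemiring R] {P : ι → Prop}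
    [DecidablePred P] (hP : ∀ a b, P a → P b → a = b) (u v : ι → R) :
    (∑ a, if P a then u a else 0) * (∑ a, if P a then v a else 0) =
      ∑ a, if P a then u a * v a else 0 := by
  rw [Finset.sum_mul_sum]
  refine Finset.sum_congr rfl fun a _ => ?_
  rw [Finset.sum_eq_single a]
  · simp only [ite_zero_mul_ite_zero, and_self]
  · intro b _ hba
    by_cases hb : P b
    · rw [if_neg fun ha => hba (hP b a hb ha), zero_mul]
    · rw [if_neg hb, mul_zero]
  · simp

namespace Matrix

open Finset Polynomial

section Kronecker

variable {ι α β γ R : Type*} [Fintype ι]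

def piKronecker [CommMonoid R] (A : ι → Matrix α β R) : Matrix (ι → α) (ι → β) R :=
  of fun f g => ∏ i, A i (f i) (g i)

@[simp]
lemma piKronecker_apply [CommMonoid R] (A : ι → Matrix α β R) (f : ι → α) (g : ι → β) :
    piKronecker A f g = ∏ i, A i (f i) (g i) := rfl

lemma transpose_piKronecker [CommMonoid R] (A : ι → Matrix α β R) :
    (piKronecker A)ᵀ = piKronecker fun i => (A i)ᵀ := rfl

lemma piKronecker_one [CommSemiring R] [DecidableEq α] :
    piKronecker (fun _ : ι => (1 : Matrix α α R)) = 1 := by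
  ext f g
  simp [one_apply, Fintype.prod_boole, funext_iff]

variable [DecidableEq ι]

lemma piKronecker_mul [CommSemiring R] [Fintype β] [DecidableEq β] (A : ι → Matrix α β R)
    (B : ι → Matrix β γ R) : piKronecker A * piKronecker B = piKronecker fun i => A i * B i := by
  ext f h
  simp only [piKronecker_apply, mul_apply, Fintype.prod_sum, prod_mul_distrib]

lemma piKronecker_update_apply [CommMonoid R] (A : ι → Matrix α β R) (a : ι)
    (X : Matrix α β R) (f : ι → α) (g : ι → β) :
    piKronecker (Function.update A a X) f g = X (f a) (g a) * ∏ i ∈ {a}ᶜ, A i (f i) (g i) := by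
  rw [piKronecker_apply, Fintype.prod_eq_mul_prod_compl a, Function.update_self]
  congr 1
  exact prod_congr rfl fun i hi => by rw [Function.update_of_ne (by simpa using hi)]

lemma piKronecker_update_add [CommSemiring R] (A : ι → Matrix α β R) (a : ι)
    (X Y : Matrix α β R) :
    piKronecker (Function.update A a (X + Y)) =
      piKronecker (Function.update A a X) + piKronecker (Function.update A a Y) := by
  ext f g
  simp only [add_apply, piKronecker_update_apply, add_mul]

lemma piKronecker_add_piKronecker_eq_zero [CommRing R] {A B : ι → Matrix α β R} (a : ι)
    (ha : A a = -B a) (h : ∀ i ≠ a, A i = B i) : piKronecker A + piKronecker B = 0 := by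
  have hA : A = Function.update B a (-B a) := by
    ext1 i
    rcases eq_or_ne i a with rfl | hi
    · simp [ha]
    · simp [hi, h i hi]
  ext f g
  rw [hA, add_apply, piKronecker_update_apply, ← Function.update_eq_self a B,
    piKronecker_update_apply, Function.update_eq_self, neg_apply, zero_apply]
  ring

variable [DecidableEq α]

def piKroneckerSum [CommSemiring R] (E : ι → Matrix α α R) : Matrix (ι → α) (ι → α) R :=
  ∑ a, piKronecker (Function.update 1 a (E a))

lemma piKroneckerSum_mul_piKronecker [CommSemiring R] [Fintype α] {E F P : ι → Matrix α α R}
    (h : ∀ a, E a * P a = P a * F a) :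
    piKroneckerSum E * piKronecker P = piKronecker P * piKroneckerSum F := by
  simp only [piKroneckerSum, sum_mul, mul_sum, piKronecker_mul]
  refine sum_congr rfl fun a _ => congrArg piKronecker (funext fun i => ?_)
  rcases eq_or_ne i a with rfl | hi
  · simp [h]
  · simp [hi]

lemma piKroneckerSum_diagonal [CommSemiring R] (d : ι → α → R) :
    piKroneckerSum (fun a => diagonal (d a)) = diagonal fun f => ∑ a, d a (f a) := by
  ext f g
  simp only [piKroneckerSum, sum_apply, piKronecker_update_apply, Pi.one_apply, one_apply,
    prod_boole, diagonal_apply]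
  rcases eq_or_ne f g with rfl | hfg
  · simp
  · rw [if_neg hfg]
    refine sum_eq_zero fun a _ => ?_
    have : ¬(f a = g a ∧ ∀ i ∈ ({a}ᶜ : Finset ι), f i = g i) := fun ⟨ha, hi⟩ =>
      hfg (funext fun i => by rcases eq_or_ne i a with rfl | h; exacts [ha, hi i (by simpa)])
    split_ifs <;> simp_all

end Kronecker

variable {m n k R : Type*} [CommRing R]

lemma toBlock_mul_of_toBlock_compl_eq_zero [Fintype n] {p : m → Prop} {q : n → Prop}
    [DecidablePred q] [Fintype {j // q j}] {r : k → Prop} {A : Matrix m n R} (B : Matrix n k R)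
    (hA : A.toBlock p (fun j => ¬q j) = 0) :
    (A * B).toBlock p r = A.toBlock p q * B.toBlock q r := by
  rw [toBlock_mul_eq_add p q r, hA, Matrix.zero_mul, add_zero]
  congr
  exact Subsingleton.elim _ _

lemma charpoly_toBlock_of_mul_eq_mul_diagonal [Fintype m] [DecidableEq m] {L T T' : Matrix m m R}
    {d : m → R} (p : m → Prop) [DecidablePred p] [Fintype {i // p i}]
    (hLT : L * T = T * diagonal d) (hTT' : T * T' = 1)
    (hL : L.toBlock p (fun i => ¬p i) = 0) (hT : T.toBlock p (fun i => ¬p i) = 0) :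
    (L.toBlock p p).charpoly = ∏ i : {i // p i}, (X - C (d i)) := by
  have hinv : T'.toBlock p p * T.toBlock p p = 1 := by
    rw [mul_eq_one_comm, ← toBlock_mul_of_toBlock_compl_eq_zero _ hT, hTT', toBlock_one_self]
  have hconj : L.toBlock p p * T.toBlock p p =
      T.toBlock p p * diagonal fun i : {i // p i} => d i := by
    rw [← toBlock_mul_of_toBlock_compl_eq_zero _ hL, hLT,
      toBlock_mul_of_toBlock_compl_eq_zero _ hT, toBlock_diagonal_self]
  have hL' : L.toBlock p p =
      T.toBlock p p * diagonal (fun i : {i // p i} => d i) * T'.toBlock p p := by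
    rw [← hconj, mul_assoc, mul_eq_one_comm.mp hinv, mul_one]
  rw [hL', charpoly_mul_comm, ← mul_assoc, hinv, one_mul, charpoly_diagonal]

end Matrix

namespace CubicalPaper

open Finset

noncomputable def starSign : Matrix (Fin 3) (Fin 3) ℝ := diagonal fun r => if r = 2 then -1 else 1

noncomputable def intervalBdry (q x y : ℝ) : Matrix (Fin 3) (Fin 3) ℝ :=
  !![0, 0, -(q / x); 0, 0, q / y; 0, 0, 0]

noncomputable def intervalLaplacian (q x y : ℝ) : Matrix (Fin 3) (Fin 3) ℝ :=
  !![(q / x) ^ 2, -(q / x * (q / y)), 0;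
     -(q / x * (q / y)), (q / y) ^ 2, 0;
     0, 0, (q / x) ^ 2 + (q / y) ^ 2]

noncomputable def intervalEigenvalues (q x y : ℝ) : Fin 3 → ℝ :=
  ![0, (q / x) ^ 2 + (q / y) ^ 2, (q / x) ^ 2 + (q / y) ^ 2]

/- The kernel of the rank-one block of `intervalLaplacian` is spanned by `(1/y, 1/x)`, its image
by `(-1/x, 1/y)`; taking these without the factor `q` keeps the basis invertible when `q = 0`. -/
noncomputable def intervalEigenbasis (x y : ℝ) : Matrix (Fin 3) (Fin 3) ℝ :=
  !![y⁻¹, -x⁻¹, 0; x⁻¹, y⁻¹, 0; 0, 0, 1]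

def PreservesStar (M : Matrix (Fin 3) (Fin 3) ℝ) : Prop := ∀ r s, M r s ≠ 0 → (r = 2 ↔ s = 2)

lemma transpose_starSign : starSignᵀ = starSign := diagonal_transpose _

lemma starSign_mul_self : starSign * starSign = 1 := by
  rw [starSign, diagonal_mul_diagonal, ← diagonal_one]
  congr 1
  ext r
  split_ifs <;> norm_num

lemma intervalBdry_mul_starSign (q x y : ℝ) :
    intervalBdry q x y * starSign = -(starSign * intervalBdry q x y) := by
  ext r s
  fin_cases r <;> fin_cases s <;> simp [intervalBdry, starSign]

lemma intervalBdry_ne_zero {q x y : ℝ} {r s : Fin 3} (h : intervalBdry q x y r s ≠ 0) :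
    s = 2 ∧ r ≠ 2 := by
  fin_cases r <;> fin_cases s <;> simp_all [intervalBdry]

lemma intervalBdry_mul_transpose_add (q x y : ℝ) :
    intervalBdry q x y * (intervalBdry q x y)ᵀ + (intervalBdry q x y)ᵀ * intervalBdry q x y =
      intervalLaplacian q x y := by
  ext r s
  simp only [Matrix.add_apply, mul_apply, transpose_apply, Fin.sum_univ_three]
  fin_cases r <;> fin_cases s <;> simp [intervalLaplacian, intervalBdry] <;> ring

lemma intervalLaplacian_mul_eigenbasis (q x y : ℝ) :
    intervalLaplacian q x y * intervalEigenbasis x y =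
      intervalEigenbasis x y * diagonal (intervalEigenvalues q x y) := by
  ext r s
  fin_cases r <;> fin_cases s <;>
    simp [intervalLaplacian, intervalEigenbasis, intervalEigenvalues, mul_apply,
      Fin.sum_univ_three] <;> ring

lemma det_intervalEigenbasis_ne_zero {x : ℝ} (hx : x ≠ 0) (y : ℝ) :
    (intervalEigenbasis x y).det ≠ 0 := by
  have : (intervalEigenbasis x y).det = x⁻¹ ^ 2 + y⁻¹ ^ 2 := by
    simp [intervalEigenbasis, det_fin_three]
    ring
  rw [this]
  positivity

lemma preservesStar_one : PreservesStar 1 := by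
  intro r s h
  obtain rfl : r = s := by_contra fun hrs => h (one_apply_ne hrs)
  rfl

lemma preservesStar_intervalLaplacian (q x y : ℝ) : PreservesStar (intervalLaplacian q x y) := by
  intro r s
  fin_cases r <;> fin_cases s <;> simp [intervalLaplacian]

lemma preservesStar_intervalEigenbasis (x y : ℝ) : PreservesStar (intervalEigenbasis x y) := by
  intro r s
  fin_cases r <;> fin_cases s <;> simp [intervalEigenbasis]

variable {n : ℕ}

lemma mem_faceSet_univ {f : Face n} {k : ℕ} : f ∈ faceSet univ k ↔ fdim f = k := by
  simp [faceSet]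

-- An `abbrev`, so that it unfolds reducibly to the condition written in `eps` and `wbdryM`.
abbrev IsFacetAt (a : Fin n) (f g : Face n) : Prop :=
  g a = 2 ∧ f a ≠ 2 ∧ ∀ b, b ≠ a → f b = g b

lemma IsFacetAt.unique {a b : Fin n} {f g : Face n} (ha : IsFacetAt a f g)
    (hb : IsFacetAt b f g) : a = b :=
  by_contra fun hab => ha.2.1 ((hb.2.2 a hab).trans ha.1)

lemma IsFacetAt.fdim_eq {a : Fin n} {f g : Face n} (h : IsFacetAt a f g) :
    fdim g = fdim f + 1 := by
  obtain ⟨hga, hfa, hoff⟩ := h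
  have : dir g = insert a (dir f) := by
    ext b
    rcases eq_or_ne b a with rfl | hb
    · simp [dir, hga]
    · simp [dir, hb, hoff b hb]
  rw [fdim, fdim, this, card_insert_of_notMem (by simp [dir, hfa])]

lemma fdim_eq_of_piKronecker_ne_zero {A : Fin n → Matrix (Fin 3) (Fin 3) ℝ}
    (hA : ∀ i, PreservesStar (A i)) {f g : Face n} (h : piKronecker A f g ≠ 0) :
    fdim f = fdim g := by
  rw [piKronecker_apply, prod_ne_zero_iff] at h
  have : dir f = dir g := by
    ext i
    simp [dir, hA i _ _ (h i (mem_univ i))]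
  rw [fdim, fdim, this]

lemma toBlock_piKronecker_eq_zero {A : Fin n → Matrix (Fin 3) (Fin 3) ℝ}
    (hA : ∀ i, PreservesStar (A i)) (k : ℕ) :
    (piKronecker A).toBlock (· ∈ faceSet univ k) (fun g => g ∉ faceSet univ k) = 0 := by
  ext f g
  by_contra h
  exact g.2 (mem_faceSet_univ.mpr
    ((fdim_eq_of_piKronecker_ne_zero hA h).symm.trans (mem_faceSet_univ.mp f.2)))

lemma toBlock_piKroneckerSum_eq_zero {E : Fin n → Matrix (Fin 3) (Fin 3) ℝ}
    (hE : ∀ i, PreservesStar (E i)) (k : ℕ) :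
    (piKroneckerSum E).toBlock (· ∈ faceSet univ k) (fun g => g ∉ faceSet univ k) = 0 := by
  ext f g
  simp only [piKroneckerSum, toBlock_apply, Matrix.sum_apply, Matrix.zero_apply]
  refine sum_eq_zero fun a _ => ?_
  have hA : ∀ i, PreservesStar
      (Function.update (1 : Fin n → Matrix (Fin 3) (Fin 3) ℝ) a (E a) i) := fun i => by
    rcases eq_or_ne i a with rfl | hi
    · simpa using hE i
    · simpa [hi] using preservesStar_one
  exact congrFun₂ (toBlock_piKronecker_eq_zero hA k) f g

variable (q x y : Fin n → ℝ)

noncomputable def cubeBdryDir (a : Fin n) : Matrix (Face n) (Face n) ℝ :=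
  piKronecker fun i =>
    if i < a then starSign else if i = a then intervalBdry (q a) (x a) (y a) else 1

noncomputable def cubeBdry : Matrix (Face n) (Face n) ℝ := ∑ a, cubeBdryDir q x y a

noncomputable def cubeLaplacian : Matrix (Face n) (Face n) ℝ :=
  piKroneckerSum fun a => intervalLaplacian (q a) (x a) (y a)

noncomputable def cubeEigenbasis : Matrix (Face n) (Face n) ℝ :=
  piKronecker fun a => intervalEigenbasis (x a) (y a)

lemma isFacetAt_of_cubeBdryDir_ne_zero {a : Fin n} {f g : Face n}
    (h : cubeBdryDir q x y a f g ≠ 0) : IsFacetAt a f g := by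
  rw [cubeBdryDir, piKronecker_apply, prod_ne_zero_iff] at h
  have ha := h a (mem_univ a)
  simp only [lt_irrefl, if_false, if_true] at ha
  refine ⟨(intervalBdry_ne_zero ha).1, (intervalBdry_ne_zero ha).2, fun b hb => ?_⟩
  have hb' := h b (mem_univ b)
  simp only [hb, if_false] at hb'
  by_contra hfg
  split_ifs at hb'
  · exact hb' (diagonal_apply_ne _ hfg)
  · exact hb' (one_apply_ne hfg)

lemma cubeBdryDir_apply_of_isFacetAt {a : Fin n} {f g : Face n} (h : IsFacetAt a f g) :
    cubeBdryDir q x y a f g =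
      (-1) ^ (#{b | g b = 2 ∧ b ≤ a} + if f a = 1 then 1 else 0) *
        (if f a = 0 then q a / x a else q a / y a) := by
  obtain ⟨hga, hfa, hoff⟩ := h
  have hfactor : ∀ i, (if i < a then starSign else
      if i = a then intervalBdry (q a) (x a) (y a) else 1) (f i) (g i) =
      (if g i = 2 ∧ i ≤ a then -1 else 1) *
        if i = a then -intervalBdry (q a) (x a) (y a) (f a) 2 else 1 := by
    intro i
    rcases lt_trichotomy i a with hi | rfl | hi
    · simp [hi, hi.ne, hi.le, hoff i hi.ne, starSign]
    · simp [hga]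
    · simp [not_lt_of_gt hi, not_le_of_gt hi, hi.ne', hoff i hi.ne', one_apply]
  have hpivot : -intervalBdry (q a) (x a) (y a) (f a) 2 =
      (-1) ^ (if f a = 1 then 1 else 0) * if f a = 0 then q a / x a else q a / y a := by
    revert hfa
    generalize f a = r
    fin_cases r <;> simp [intervalBdry]
  rw [cubeBdryDir, piKronecker_apply, prod_congr rfl fun i _ => hfactor i, prod_mul_distrib,
    prod_ite_eq', if_pos (mem_univ a), hpivot, prod_ite, prod_const, prod_const_one, mul_one,
    pow_add, mul_assoc]

lemma fdim_eq_of_cubeBdry_ne_zero {f g : Face n} (h : cubeBdry q x y f g ≠ 0) :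
    fdim g = fdim f + 1 := by
  rw [cubeBdry, Matrix.sum_apply] at h
  obtain ⟨a, -, ha⟩ := exists_ne_zero_of_sum_ne_zero h
  exact (isFacetAt_of_cubeBdryDir_ne_zero q x y ha).fdim_eq

lemma wbdryM_eq_toBlock (k : ℕ) :
    wbdryM q x y k =
      (cubeBdry q x y).toBlock (· ∈ faceSet univ k) (· ∈ faceSet univ (k + 1)) := by
  ext f g
  rw [toBlock_apply, cubeBdry, Matrix.sum_apply, wbdryM, of_apply, eps]
  push_cast
  rw [sum_ite_mul_sum_ite fun a b ha hb => IsFacetAt.unique ha hb]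
  refine sum_congr rfl fun a _ => ?_
  by_cases h : IsFacetAt a f g
  · rw [if_pos h, cubeBdryDir_apply_of_isFacetAt q x y h]
  · rw [if_neg h]
    by_contra hne
    exact h (isFacetAt_of_cubeBdryDir_ne_zero q x y (Ne.symm hne))

lemma cubeBdryDir_anticomm_of_lt {a b : Fin n} (hab : a < b) :
    cubeBdryDir q x y a * (cubeBdryDir q x y b)ᵀ + (cubeBdryDir q x y b)ᵀ * cubeBdryDir q x y a =
      0 := by
  simp only [cubeBdryDir, transpose_piKronecker, piKronecker_mul]
  refine piKronecker_add_piKronecker_eq_zero a ?_ fun i hi => ?_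
  · simp [hab, transpose_starSign, intervalBdry_mul_starSign]
  · rcases hi.lt_or_gt with h | h
    · simp [h, h.trans hab, transpose_starSign]
    · simp [not_lt_of_gt h, h.ne']

lemma cubeBdryDir_anticomm {a b : Fin n} (hab : a ≠ b) :
    cubeBdryDir q x y a * (cubeBdryDir q x y b)ᵀ + (cubeBdryDir q x y b)ᵀ * cubeBdryDir q x y a =
      0 := by
  rcases hab.lt_or_gt with h | h
  · exact cubeBdryDir_anticomm_of_lt q x y h
  · simpa [transpose_add, transpose_mul] using
      congrArg transpose (cubeBdryDir_anticomm_of_lt q x y h)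

lemma cubeBdryDir_mul_transpose_add_self (a : Fin n) :
    cubeBdryDir q x y a * (cubeBdryDir q x y a)ᵀ + (cubeBdryDir q x y a)ᵀ * cubeBdryDir q x y a =
      piKronecker (Function.update 1 a (intervalLaplacian (q a) (x a) (y a))) := by
  rw [← intervalBdry_mul_transpose_add, piKronecker_update_add]
  simp only [cubeBdryDir, transpose_piKronecker, piKronecker_mul]
  congr 2 <;> funext i
  all_goals
    rcases lt_trichotomy i a with h | rfl | h
    · simp [h, h.ne, starSign_mul_self, transpose_starSign]
    · simp
    · simp [not_lt_of_gt h, h.ne']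

lemma cubeBdry_mul_transpose_add :
    cubeBdry q x y * (cubeBdry q x y)ᵀ + (cubeBdry q x y)ᵀ * cubeBdry q x y =
      cubeLaplacian q x y := by
  simp only [cubeBdry, transpose_sum, sum_mul_sum]
  rw [sum_comm (f := fun b a => (cubeBdryDir q x y b)ᵀ * cubeBdryDir q x y a), ← sum_add_distrib]
  refine sum_congr rfl fun a _ => ?_
  rw [← sum_add_distrib, sum_eq_single a (fun b _ hba => cubeBdryDir_anticomm q x y hba.symm)
    (by simp), cubeBdryDir_mul_transpose_add_self]

lemma wLud_eq_toBlock (k : ℕ) :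
    wLud q x y k = (cubeBdry q x y * (cubeBdry q x y)ᵀ).toBlock
      (· ∈ faceSet univ k) (· ∈ faceSet univ k) := by
  have hup : (cubeBdry q x y).toBlock (· ∈ faceSet univ k)
      (fun g => g ∉ faceSet univ (k + 1)) = 0 := by
    ext f g
    by_contra h
    exact g.2 (mem_faceSet_univ.mpr (by
      rw [fdim_eq_of_cubeBdry_ne_zero q x y h, mem_faceSet_univ.mp f.2]))
  rw [toBlock_mul_of_toBlock_compl_eq_zero _ hup, wLud, wbdryM_eq_toBlock]
  rfl

lemma wLdu_eq_toBlock (k : ℕ) :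
    wLdu q x y k = ((cubeBdry q x y)ᵀ * cubeBdry q x y).toBlock
      (· ∈ faceSet univ k) (· ∈ faceSet univ k) := by
  cases k with
  | zero =>
    have hzero : (cubeBdry q x y)ᵀ.toBlock (· ∈ faceSet univ 0) ⊤ = 0 := by
      ext f e
      by_contra h
      have := fdim_eq_of_cubeBdry_ne_zero q x y h
      rw [mem_faceSet_univ.mp f.2] at this
      omega
    rw [toBlock_mul_eq_mul, hzero, Matrix.zero_mul]
    rfl
  | succ j =>
    have hlow : (cubeBdry q x y)ᵀ.toBlock (· ∈ faceSet univ (j + 1))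
        (fun e => e ∉ faceSet univ j) = 0 := by
      ext f e
      by_contra h
      have := fdim_eq_of_cubeBdry_ne_zero q x y h
      rw [mem_faceSet_univ.mp f.2] at this
      exact e.2 (mem_faceSet_univ.mpr (by omega))
    rw [toBlock_mul_of_toBlock_compl_eq_zero _ hlow, wLdu, wbdryM_eq_toBlock]
    rfl

lemma wLtot_eq_toBlock (k : ℕ) :
    wLtot q x y k = (cubeLaplacian q x y).toBlock (· ∈ faceSet univ k) (· ∈ faceSet univ k) := by
  rw [← cubeBdry_mul_transpose_add, wLtot, wLud_eq_toBlock, wLdu_eq_toBlock]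
  rfl

lemma cubeLaplacian_mul_eigenbasis :
    cubeLaplacian q x y * cubeEigenbasis x y =
      cubeEigenbasis x y * diagonal fun t => ∑ a, intervalEigenvalues (q a) (x a) (y a) (t a) := by
  rw [cubeLaplacian, cubeEigenbasis,
    piKroneckerSum_mul_piKronecker fun a => intervalLaplacian_mul_eigenbasis (q a) (x a) (y a),
    piKroneckerSum_diagonal]

lemma cubeEigenbasis_mul_inv (hx : ∀ i, x i ≠ 0) :
    cubeEigenbasis x y * piKronecker (fun a => (intervalEigenbasis (x a) (y a))⁻¹) = 1 := by
  simp_rw [cubeEigenbasis, piKronecker_mul,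
    mul_nonsing_inv _ (det_intervalEigenbasis_ne_zero (hx _) _).isUnit, piKronecker_one]

def supp (f : Face n) : Finset (Fin n) := {i | f i ≠ 0}

lemma sum_intervalEigenvalues_eq_sum_supp (t : Face n) :
    ∑ a, intervalEigenvalues (q a) (x a) (y a) (t a) =
      ∑ j ∈ supp t, (q j ^ 2 / x j ^ 2 + q j ^ 2 / y j ^ 2) := by
  rw [supp, sum_filter]
  refine sum_congr rfl fun a _ => ?_
  generalize t a = v
  fin_cases v <;> simp [intervalEigenvalues, div_pow]

lemma card_filter_supp_eq_choose (k : ℕ) (C : Finset (Fin n)) :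
    #{t ∈ faceSet univ k | supp t = C} = C.card.choose k := by
  set face : Finset (Fin n) → Face n := fun S i => if i ∈ S then 2 else if i ∈ C then 1 else 0
  have dir_face : ∀ S, dir (face S) = S := fun S => by
    ext i
    by_cases hS : i ∈ S <;> by_cases hC : i ∈ C <;> simp [face, dir, hS, hC]
  rw [← card_powersetCard k C]
  refine card_nbij' dir face (fun t ht => ?_) (fun S hS => ?_) (fun t ht => ?_) (fun S _ => ?_)
  · obtain ⟨hk, rfl⟩ : fdim t = k ∧ supp t = C := by simpa [mem_faceSet_univ] using ht
    refine mem_powersetCard.mpr ⟨fun i hi => ?_, hk⟩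
    simp_all [dir, supp]
  · obtain ⟨hSC, hk⟩ := mem_powersetCard.mp hS
    suffices supp (face S) = C by simpa [mem_faceSet_univ, fdim, dir_face, hk]
    ext i
    by_cases hS : i ∈ S
    · simp [face, supp, hS, hSC hS]
    · by_cases hC : i ∈ C <;> simp [face, supp, hS, hC]
  · obtain ⟨-, rfl⟩ : fdim t = k ∧ supp t = C := by simpa [mem_faceSet_univ] using ht
    funext i
    generalize hti : t i = v
    fin_cases v <;> simp [face, dir, supp, hti]
  · exact dir_face S

lemma prod_faceSet_eq_prod_pow_choose {M : Type*} [CommMonoid M] (h : Finset (Fin n) → M)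
    (k : ℕ) :
    ∏ t : {f // f ∈ faceSet univ k}, h (supp t.1) = ∏ C, h C ^ C.card.choose k := by
  rw [prod_coe_sort (faceSet univ k) fun t => h (supp t), ← prod_fiberwise' (faceSet univ k) supp]
  refine prod_congr rfl fun C _ => ?_
  rw [prod_const, card_filter_supp_eq_choose]

theorem weighted_cube_total_spectrum_general (n : ℕ)
    (q x y : Fin n → ℝ) (hx : ∀ i, x i ≠ 0)
    (k : ℕ) :
    (wLtot q x y k).charpoly =
      ∏ C : Finset (Fin n),
        (Polynomial.X -
            Polynomial.C (∑ j ∈ C, (q j ^ 2 / x j ^ 2 + q j ^ 2 / y j ^ 2))) ^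
          (C.card.choose k) := by
  rw [wLtot_eq_toBlock, charpoly_toBlock_of_mul_eq_mul_diagonal _
    (cubeLaplacian_mul_eigenbasis q x y) (cubeEigenbasis_mul_inv x y hx)
    (toBlock_piKroneckerSum_eq_zero (fun _ => preservesStar_intervalLaplacian _ _ _) k)
    (toBlock_piKronecker_eq_zero (fun _ => preservesStar_intervalEigenbasis _ _) k)]
  simp_rw [sum_intervalEigenvalues_eq_sum_supp]
  exact prod_faceSet_eq_prod_pow_choose
    (fun C => Polynomial.X - Polynomial.C (∑ j ∈ C, (q j ^ 2 / x j ^ 2 + q j ^ 2 / y j ^ 2))) k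

/-- **Algebraically weighted total Laplacian spectra of cubes** (Duval–Klivans–Martin,
Thm. 4.1, eqn. (4.3)).  With `u_C = Σ_{j ∈ C} (q_j²/x_j² + q_j²/y_j²)`, the
characteristic polynomial of `L̂^tot_k(Q_n)` equals
`∏_{C ⊆ [n]} (y - u_C)^{binom(|C|, k)}`. -/
theorem weighted_cube_total_spectrum (n : ℕ) (hn : 1 ≤ n)
    (q x y : Fin n → ℝ) (hx : ∀ i, x i ≠ 0) (hy : ∀ i, y i ≠ 0)
    (k : ℕ) (hk : k ≤ n) :
    (wLtot q x y k).charpoly =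
      ∏ C : Finset (Fin n),
        (Polynomial.X -
            Polynomial.C (∑ j ∈ C, (q j ^ 2 / x j ^ 2 + q j ^ 2 / y j ^ 2))) ^
          (C.card.choose k) :=
  weighted_cube_total_spectrum_general n q x y hx k

end CubicalPaper
end
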